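/- Let S be a group-bound inverse subsemigroup of IS(X) and let x, y ∈ S be such that y = axa⁻¹ for some a ∈ S with a⁻¹a ≥ e_x. Set â = a e_x. Then â⁻¹â = e_x, ââ⁻¹ = e_y, y e_y = â (x e_x) â⁻¹, and x e_x = â⁻¹ (y e_y) â; in particular x e_x ∼_p y e_y â â⁻¹ = y e_y, so x e_x ∼ y e_y. -/

import Mathlib

/-!
Write `â = a e_x` and `g = a⁻¹a`. Since `e_x ≤ g` and `e_x` commutes with `x` (it is the identity
of a group containing a power of `x`), `y â = a x g e_x = a x e_x = â x` and
`â⁻¹â = e_x g e_x = e_x`.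
Choose `n` with `xⁿ ∈ H_{e_x}` and `yⁿ ∈ H_{e_y}`, so `e_x = xⁿx⁻ⁿ` and `e_y = yⁿy⁻ⁿ`. Then
`ââ⁻¹ = â xⁿx⁻ⁿ â⁻¹` is the range of `yⁿâ = âxⁿ`, hence below `e_y`; conversely `yⁿ ≤ a xⁿ a⁻¹`
in the natural partial order, so `e_y` lies below the range of `a xⁿ`, which is `a e_x a⁻¹ = ââ⁻¹`.
With `ââ⁻¹ = e_y` the remaining identities are direct computations, and `x e_x = â⁻¹ · (â x)`,
`y e_y = (â x) · â⁻¹` exhibits the primary conjugacy.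
-/

namespace SgConjPaper

/-- `spow x n = x^(n+1)`: positive powers of an element of a semigroup. -/
def spow {S : Type*} [Semigroup S] (x : S) : ℕ → S
  | 0 => x
  | n + 1 => spow x n * x

/-- `a` lies in the maximal subgroup of `S` whose identity is the idempotent
`e` (i.e. `e` is a two-sided identity for `a` and `a` is invertible over `e`). -/
def InMaxSubgroup {S : Type*} [Semigroup S] (e a : S) : Prop :=
  e * a = a ∧ a * e = a ∧ ∃ b : S, e * b = b ∧ b * e = b ∧ a * b = e ∧ b * a = e

/-- `e` is the idempotent `e_x`: the identity of the maximal subgroup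
containing some positive power of `x`. -/
def IsEIdem {S : Type*} [Semigroup S] (x e : S) : Prop :=
  ∃ k : ℕ, InMaxSubgroup e (spow x k)

/-- A semigroup is group-bound if some positive power of every element lies
in a subgroup. -/
def GroupBound (S : Type*) [Semigroup S] : Prop := ∀ x : S, ∃ e : S, IsEIdem x e

/-- Primary conjugacy: `x = uv`, `y = vu` for some `u, v ∈ S¹`. -/
def PrimConj {S : Type*} [Semigroup S] (x y : S) : Prop :=
  ∃ u v : WithOne S, (x : WithOne S) = u * v ∧ (y : WithOne S) = v * u

/-- Conjugacy `∼`: the transitive closure of primary conjugacy. -/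
def SgConj {S : Type*} [Semigroup S] : S → S → Prop := Relation.TransGen PrimConj

/-- Conjugacy in the character sense `≡`: equal traces under every
finite-dimensional complex representation. -/
def CharEq {S : Type*} [Semigroup S] (x y : S) : Prop :=
  ∀ (V : Type) (_ : AddCommGroup V) (_ : Module ℂ V) (_ : FiniteDimensional ℂ V)
    (φ : S →ₙ* Module.End ℂ V),
    LinearMap.trace ℂ V (φ x) = LinearMap.trace ℂ V (φ y)

/-- A semigroup is regular if for every `a` there is `b` with `a = aba`. -/
def Regular (S : Type*) [Semigroup S] : Prop := ∀ a : S, ∃ b : S, a * b * a = a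

/-- The symmetric inverse semigroup `IS(X)`: partial bijections of `X`,
modelled as functions `X → Option X` that are injective where defined. -/
def PBij (X : Type*) : Type _ :=
  {f : X → Option X // ∀ ⦃x y z : X⦄, f x = some z → f y = some z → x = y}

namespace PBij

variable {X : Type*}

instance : Mul (PBij X) :=
  ⟨fun f g =>
    ⟨fun x => (g.1 x).bind f.1, by
      intro x y z hx hy
      rcases Option.bind_eq_some_iff.mp hx with ⟨a, ha, ha'⟩
      rcases Option.bind_eq_some_iff.mp hy with ⟨b, hb, hb'⟩
      have : a = b := f.2 ha' hb'
      exact g.2 (this ▸ ha) hb⟩⟩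

theorem mul_apply (f g : PBij X) (x : X) : (f * g).1 x = (g.1 x).bind f.1 := rfl

instance : Semigroup (PBij X) where
  mul_assoc f g h := by
    apply Subtype.ext
    funext x
    show (h.1 x).bind (fun y => (g.1 y).bind f.1) = ((h.1 x).bind g.1).bind f.1
    exact (Option.bind_assoc _ _ _).symm

open Classical in
/-- The inverse of a partial bijection. -/
noncomputable def pinv (f : PBij X) : PBij X :=
  ⟨fun y => if h : ∃ x : X, f.1 x = some y then some h.choose else none, by
    intro x y z hx hy
    dsimp only at hx hy
    split_ifs at hx hy with h1 h2
    · have hx' := Option.some.inj hx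
      have hy' := Option.some.inj hy
      have e1 : f.1 z = some x := hx' ▸ h1.choose_spec
      have e2 : f.1 z = some y := hy' ▸ h2.choose_spec
      exact Option.some.inj (e1.symm.trans e2)⟩

/-- The domain of a partial bijection. -/
def pdom (f : PBij X) : Set X := {x | f.1 x ≠ none}

/-- The image of a set under a partial bijection. -/
def pimage (f : PBij X) (A : Set X) : Set X := {y | ∃ x ∈ A, f.1 x = some y}

/-- The stable image of `f`: the points lying on cycles of `f`. -/
def stim (f : PBij X) : Set X := {t | ∃ m : ℕ, (spow f m).1 t = some t}

/-- The cycle of `f` through `t` (the forward orbit of `t`; for `t ∈ stim f`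
this is precisely the cycle containing `t`). -/
def cycleOf (f : PBij X) (t : X) : Set X := {s | ∃ m : ℕ, (spow f m).1 t = some s}

/-- The set of cycles of a partial bijection. -/
def cycles (f : PBij X) : Set (Set X) := {C | ∃ t ∈ stim f, C = cycleOf f t}

end PBij

/-- An inverse subsemigroup of `IS(X)`: a subsemigroup closed under inverses. -/
structure InvSubsemigroup (X : Type*) where
  carrier : Set (PBij X)
  mul_mem : ∀ ⦃a b : PBij X⦄, a ∈ carrier → b ∈ carrier → a * b ∈ carrier
  inv_mem : ∀ ⦃a : PBij X⦄, a ∈ carrier → PBij.pinv a ∈ carrier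

instance {X : Type*} (T : InvSubsemigroup X) : Semigroup T.carrier where
  mul a b := ⟨a.1 * b.1, T.mul_mem a.2 b.2⟩
  mul_assoc a b c := Subtype.ext (mul_assoc a.1 b.1 c.1)

/-- The inverse operation on an inverse subsemigroup of `IS(X)`. -/
noncomputable def sinv {X : Type*} (T : InvSubsemigroup X) (a : T.carrier) : T.carrier :=
  ⟨PBij.pinv a.1, T.inv_mem a.2⟩

section Semigroup

variable {S : Type*} [Semigroup S]

theorem spow_add (x : S) (m n : ℕ) : spow x (m + n + 1) = spow x m * spow x n := by
  induction n with
  | zero => rfl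
  | succ n ih => rw [show m + (n + 1) + 1 = m + n + 1 + 1 by omega, spow, ih, spow, mul_assoc]

theorem spow_spow (x : S) (m n : ℕ) : spow (spow x m) n = spow x (m * n + m + n) := by
  induction n with
  | zero => simp [spow]
  | succ n ih =>
    rw [spow, ih, ← spow_add]
    congr 1
    ring

theorem commute_spow_self (x : S) (n : ℕ) : Commute x (spow x n) := by
  induction n with
  | zero => exact Commute.refl x
  | succ n ih => exact ih.mul_right (Commute.refl x)

theorem _root_.SemiconjBy.spow {c p q : S} (h : SemiconjBy c q p) (n : ℕ) :
    SemiconjBy c (spow q n) (spow p n) := by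
  induction n with
  | zero => exact h
  | succ n ih => exact ih.mul_right h

theorem primConj_of_eq_mul {x y u v : S} (hx : x = u * v) (hy : y = v * u) : PrimConj x y :=
  ⟨u, v, by rw [hx, WithOne.coe_mul], by rw [hy, WithOne.coe_mul]⟩

namespace InMaxSubgroup

variable {e u v : S}

theorem isIdempotentElem (h : InMaxSubgroup e u) : IsIdempotentElem e := by
  obtain ⟨heu, -, b, -, -, hub, -⟩ := h
  calc e * e = e * u * b := by rw [mul_assoc, hub]
    _ = e := by rw [heu, hub]

theorem mul (hu : InMaxSubgroup e u) (hv : InMaxSubgroup e v) : InMaxSubgroup e (u * v) := by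
  obtain ⟨heu, hue, b, heb, hbe, hub, hbu⟩ := hu
  obtain ⟨hev, hve, c, hec, hce, hvc, hcv⟩ := hv
  refine ⟨by rw [← mul_assoc, heu], by rw [mul_assoc, hve], c * b,
    by rw [← mul_assoc, hec], by rw [mul_assoc, hbe], ?_, ?_⟩
  · rw [mul_assoc, ← mul_assoc v, hvc, ← mul_assoc, hue, hub]
  · rw [mul_assoc, ← mul_assoc b, hbu, ← mul_assoc, hce, hcv]

theorem spow (h : InMaxSubgroup e u) (n : ℕ) : InMaxSubgroup e (SgConjPaper.spow u n) := by
  induction n with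
  | zero => exact h
  | succ n ih => exact ih.mul h

theorem commute_of_commute {x : S} (h : InMaxSubgroup e u) (hxu : Commute x u) :
    Commute e x := by
  obtain ⟨heu, hue, b, -, -, hub, hbu⟩ := h
  have hright : e * x * e = x * e :=
    calc e * x * e = e * (x * u) * b := by rw [← hub]; simp only [mul_assoc]
      _ = e * u * x * b := by rw [hxu.eq]; simp only [mul_assoc]
      _ = x * e := by rw [heu, ← hxu.eq, mul_assoc, hub]
  have hleft : e * x * e = e * x :=
    calc e * x * e = b * (u * x) * e := by rw [← mul_assoc b, hbu]
      _ = b * (x * (u * e)) := by rw [← hxu.eq]; simp only [mul_assoc]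
      _ = e * x := by rw [hue, hxu.eq, ← mul_assoc, hbu]
  exact hleft.symm.trans hright

end InMaxSubgroup

namespace IsEIdem

variable {x y e f : S}

theorem isIdempotentElem (h : IsEIdem x e) : IsIdempotentElem e :=
  let ⟨_, hk⟩ := h; hk.isIdempotentElem

theorem commute (h : IsEIdem x e) : Commute e x :=
  let ⟨k, hk⟩ := h; hk.commute_of_commute (commute_spow_self x k)

theorem exists_common_exponent (hx : IsEIdem x e) (hy : IsEIdem y f) :
    ∃ n, InMaxSubgroup e (spow x n) ∧ InMaxSubgroup f (spow y n) := by
  obtain ⟨k, hk⟩ := hx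
  obtain ⟨l, hl⟩ := hy
  refine ⟨k * l + k + l, ?_, ?_⟩
  · rw [← spow_spow]
    exact hk.spow l
  · rw [show k * l + k + l = l * k + l + k by ring, ← spow_spow]
    exact hl.spow k

end IsEIdem

end Semigroup

class InverseSemigroup (S : Type*) extends Semigroup S, InvolutiveInv S where
  mul_inv_mul_self (a : S) : a * a⁻¹ * a = a
  mul_inv_rev (a b : S) : (a * b)⁻¹ = b⁻¹ * a⁻¹
  commute_of_isIdempotentElem {e f : S} : IsIdempotentElem e → IsIdempotentElem f → Commute e f

section InverseSemigroup

variable {S : Type*} [InverseSemigroup S]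

theorem inv_mul_inv_self (a : S) : a⁻¹ * a * a⁻¹ = a⁻¹ := by
  simpa only [inv_inv] using InverseSemigroup.mul_inv_mul_self a⁻¹

theorem isIdempotentElem_mul_inv_self (a : S) : IsIdempotentElem (a * a⁻¹) := by
  rw [IsIdempotentElem, ← mul_assoc, InverseSemigroup.mul_inv_mul_self]

theorem isIdempotentElem_inv_mul_self (a : S) : IsIdempotentElem (a⁻¹ * a) := by
  rw [IsIdempotentElem, ← mul_assoc, inv_mul_inv_self]

theorem eq_inv_of_mul_mul {a b : S} (hab : a * b * a = a) (hba : b * a * b = b) : b = a⁻¹ := by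
  have hba_idem : IsIdempotentElem (b * a) := by rw [IsIdempotentElem, ← mul_assoc, hba]
  have hab_idem : IsIdempotentElem (a * b) := by rw [IsIdempotentElem, ← mul_assoc, hab]
  have hba' : b * a = a⁻¹ * a :=
    calc b * a = b * a * (a⁻¹ * a) := by
          rw [mul_assoc b, ← mul_assoc a, InverseSemigroup.mul_inv_mul_self]
      _ = a⁻¹ * (a * b * a) := by
        rw [(InverseSemigroup.commute_of_isIdempotentElem hba_idem
          (isIdempotentElem_inv_mul_self a)).eq]
        simp only [mul_assoc]
      _ = a⁻¹ * a := by rw [hab]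
  have hab' : a * b = a * a⁻¹ :=
    calc a * b = a * a⁻¹ * (a * b) := by rw [← mul_assoc, InverseSemigroup.mul_inv_mul_self]
      _ = a * b * a * a⁻¹ := by
        rw [(InverseSemigroup.commute_of_isIdempotentElem
          (isIdempotentElem_mul_inv_self a) hab_idem).eq]
        simp only [mul_assoc]
      _ = a * a⁻¹ := by rw [hab]
  calc b = a⁻¹ * (a * b) := by rw [← mul_assoc, ← hba', hba]
    _ = a⁻¹ := by rw [hab', ← mul_assoc, inv_mul_inv_self]

theorem _root_.IsIdempotentElem.inv_eq_self {e : S} (he : IsIdempotentElem e) : e⁻¹ = e :=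
  (eq_inv_of_mul_mul (by rw [he.eq, he.eq]) (by rw [he.eq, he.eq])).symm

theorem InMaxSubgroup.mul_inv_self_eq {e u : S} (h : InMaxSubgroup e u) : u * u⁻¹ = e := by
  obtain ⟨heu, -, b, heb, -, hub, hbu⟩ := h
  obtain rfl : b = u⁻¹ := eq_inv_of_mul_mul (by rw [hub, heu]) (by rw [hbu, heb])
  exact hub

def NatLE (b a : S) : Prop := ∃ e, IsIdempotentElem e ∧ b = a * e

infix:50 " ≼ " => NatLE

theorem natLE_refl (a : S) : a ≼ a :=
  ⟨a⁻¹ * a, isIdempotentElem_inv_mul_self a, by rw [← mul_assoc, InverseSemigroup.mul_inv_mul_self]⟩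

theorem NatLE.trans {a b c : S} (hcb : c ≼ b) (hba : b ≼ a) : c ≼ a := by
  obtain ⟨f, hf, rfl⟩ := hcb
  obtain ⟨e, he, rfl⟩ := hba
  exact ⟨e * f, he.mul_of_commute (InverseSemigroup.commute_of_isIdempotentElem he hf) hf,
    mul_assoc a e f⟩

theorem NatLE.mul_eq_of_isIdempotentElem {e f : S} (hf : IsIdempotentElem f) (h : e ≼ f) :
    f * e = e := by
  obtain ⟨g, -, rfl⟩ := h
  exact hf.mul_self_mul g

theorem _root_.IsIdempotentElem.eq_of_natLE {e f : S} (he : IsIdempotentElem e)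
    (hf : IsIdempotentElem f) (hef : e ≼ f) (hfe : f ≼ e) : e = f :=
  calc e = f * e := (hef.mul_eq_of_isIdempotentElem hf).symm
    _ = e * f := (InverseSemigroup.commute_of_isIdempotentElem hf he).eq
    _ = f := hfe.mul_eq_of_isIdempotentElem he

theorem mul_mul_natLE_mul {e : S} (he : IsIdempotentElem e) (p q : S) : p * e * q ≼ p * q := by
  have hqq := isIdempotentElem_mul_inv_self q
  have hcomm : e * (q * q⁻¹) = q * q⁻¹ * e :=
    (InverseSemigroup.commute_of_isIdempotentElem he hqq).eq
  refine ⟨q⁻¹ * e * q, ?_, ?_⟩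
  · calc q⁻¹ * e * q * (q⁻¹ * e * q) = q⁻¹ * (e * (q * q⁻¹)) * e * q := by
          simp only [mul_assoc]
      _ = q⁻¹ * q * q⁻¹ * (e * e) * q := by rw [hcomm]; simp only [mul_assoc]
      _ = q⁻¹ * e * q := by rw [inv_mul_inv_self, he.eq]
  · calc p * e * q = p * (e * (q * q⁻¹)) * q := by
          simp only [mul_assoc]
          rw [← mul_assoc q, InverseSemigroup.mul_inv_mul_self]
      _ = p * q * (q⁻¹ * e * q) := by rw [hcomm]; simp only [mul_assoc]

theorem NatLE.mul_right {a b : S} (h : b ≼ a) (c : S) : b * c ≼ a * c := by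
  obtain ⟨e, he, rfl⟩ := h
  exact mul_mul_natLE_mul he a c

theorem mul_inv_self_natLE_of_mul_eq {a b : S} (h : a * a⁻¹ * b = b) : b * b⁻¹ ≼ a * a⁻¹ :=
  ⟨b * b⁻¹, isIdempotentElem_mul_inv_self b, by rw [← mul_assoc, h]⟩

theorem NatLE.mul_inv_self {a b : S} (h : b ≼ a) : b * b⁻¹ ≼ a * a⁻¹ := by
  obtain ⟨e, -, rfl⟩ := h
  exact mul_inv_self_natLE_of_mul_eq (by rw [← mul_assoc, InverseSemigroup.mul_inv_mul_self])

theorem mul_mul_inv_natLE (p q : S) : p * q * (p * q)⁻¹ ≼ p * p⁻¹ :=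
  mul_inv_self_natLE_of_mul_eq (by rw [← mul_assoc, InverseSemigroup.mul_inv_mul_self])

theorem mul_mul_inv_mul (p q : S) : p * q * (p * q)⁻¹ = p * (q * q⁻¹) * p⁻¹ := by
  rw [InverseSemigroup.mul_inv_rev]
  simp only [mul_assoc]

theorem spow_conj_natLE (a x : S) (n : ℕ) : spow (a * x * a⁻¹) n ≼ a * spow x n * a⁻¹ := by
  induction n with
  | zero => exact natLE_refl _
  | succ n ih =>
    refine (ih.mul_right _).trans ?_
    simpa only [spow, mul_assoc] using
      mul_mul_natLE_mul (isIdempotentElem_inv_mul_self a) (a * spow x n) (x * a⁻¹)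

section Restriction

variable {a x e : S}

theorem inv_mul_self_eq_of_natLE (he : IsIdempotentElem e) (h : e ≼ a⁻¹ * a) :
    (a * e)⁻¹ * (a * e) = e := by
  have hae := h.mul_eq_of_isIdempotentElem (isIdempotentElem_inv_mul_self a)
  calc (a * e)⁻¹ * (a * e) = e * (a⁻¹ * a * e) := by
        rw [InverseSemigroup.mul_inv_rev, he.inv_eq_self]
        simp only [mul_assoc]
    _ = e := by rw [hae, he.eq]

theorem semiconjBy_mul_of_natLE (hex : Commute e x) (h : e ≼ a⁻¹ * a) :
    SemiconjBy (a * e) x (a * x * a⁻¹) := by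
  have hae := h.mul_eq_of_isIdempotentElem (isIdempotentElem_inv_mul_self a)
  calc a * e * x = a * (x * e) := by rw [mul_assoc, hex.eq]
    _ = a * x * a⁻¹ * (a * e) := by
      conv_lhs => rw [← hae]
      simp only [mul_assoc]

theorem mul_inv_self_eq_of_isEIdem {f : S} (hex : IsEIdem x e) (hey : IsEIdem (a * x * a⁻¹) f)
    (h : e ≼ a⁻¹ * a) : a * e * (a * e)⁻¹ = f := by
  obtain ⟨n, hxn, hyn⟩ := hex.exists_common_exponent hey
  have he := hex.isIdempotentElem
  have hu := hxn.mul_inv_self_eq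
  have hsemi : a * e * spow x n = spow (a * x * a⁻¹) n * (a * e) :=
    (semiconjBy_mul_of_natLE hex.commute h).spow n
  have hle : a * e * (a * e)⁻¹ ≼ f := by
    have hran : a * e * (a * e)⁻¹ = a * e * spow x n * (a * e * spow x n)⁻¹ := by
      rw [mul_mul_inv_mul (a * e), hu, he.mul_mul_self a]
    rw [hran, hsemi, ← hyn.mul_inv_self_eq]
    exact mul_mul_inv_natLE _ _
  have hge : f ≼ a * e * (a * e)⁻¹ := by
    have hran : a * e * (a * e)⁻¹ = a * spow x n * (a * spow x n)⁻¹ := by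
      rw [mul_mul_inv_mul, mul_mul_inv_mul, hu, he.inv_eq_self, he.eq]
    rw [hran, ← hyn.mul_inv_self_eq]
    exact (spow_conj_natLE a x n).mul_inv_self.trans (mul_mul_inv_natLE _ _)
  exact (isIdempotentElem_mul_inv_self _).eq_of_natLE hyn.isIdempotentElem hle hge

end Restriction

end InverseSemigroup

namespace PBij

variable {X : Type*}

@[ext]
theorem ext {f g : PBij X} (h : ∀ x z, f.1 x = some z ↔ g.1 x = some z) : f = g :=
  Subtype.ext <| funext fun x => Option.ext (h x)

theorem mul_apply_eq_some {f g : PBij X} {x z : X} :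
    (f * g).1 x = some z ↔ ∃ m, g.1 x = some m ∧ f.1 m = some z :=
  Option.bind_eq_some_iff

theorem pinv_apply_eq_some (f : PBij X) {x y : X} : (pinv f).1 y = some x ↔ f.1 x = some y := by
  classical
  have hdef : (pinv f).1 y = if h : ∃ x : X, f.1 x = some y then some h.choose else none := rfl
  constructor
  · intro h
    rw [hdef] at h
    split_ifs at h with hy
    exact Option.some.inj h ▸ hy.choose_spec
  · intro h
    have hy : ∃ x : X, f.1 x = some y := ⟨x, h⟩
    rw [hdef, dif_pos hy, f.2 hy.choose_spec h]

theorem eq_of_isIdempotentElem {f : PBij X} (hf : IsIdempotentElem f) {x y : X}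
    (h : f.1 x = some y) : y = x := by
  obtain ⟨m, hm, hmy⟩ := mul_apply_eq_some.mp (by rwa [hf.eq] : (f * f).1 x = some y)
  obtain rfl : m = y := Option.some.inj (hm.symm.trans h)
  exact f.2 hmy h

theorem pinv_pinv (f : PBij X) : pinv (pinv f) = f := by
  ext x z
  rw [pinv_apply_eq_some, pinv_apply_eq_some]

theorem mul_pinv_mul (f : PBij X) : f * pinv f * f = f := by
  ext x z
  simp only [mul_apply_eq_some, pinv_apply_eq_some]
  constructor
  · rintro ⟨m, hm, w, hw, hwz⟩
    rwa [f.2 hw hm] at hwz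
  · exact fun h => ⟨z, h, x, h, h⟩

theorem pinv_mul (f g : PBij X) : pinv (f * g) = pinv g * pinv f := by
  ext y x
  simp only [mul_apply_eq_some, pinv_apply_eq_some]
  exact exists_congr fun _ => and_comm

theorem commute_of_isIdempotentElem {f g : PBij X} (hf : IsIdempotentElem f)
    (hg : IsIdempotentElem g) : Commute f g := by
  ext x z
  simp only [mul_apply_eq_some]
  constructor <;> rintro ⟨m, h₁, h₂⟩
  · obtain rfl := eq_of_isIdempotentElem hg h₁
    obtain rfl := eq_of_isIdempotentElem hf h₂
    exact ⟨_, h₂, h₁⟩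
  · obtain rfl := eq_of_isIdempotentElem hf h₁
    obtain rfl := eq_of_isIdempotentElem hg h₂
    exact ⟨_, h₂, h₁⟩

noncomputable instance : InverseSemigroup (PBij X) where
  inv := pinv
  inv_inv := pinv_pinv
  mul_inv_mul_self := mul_pinv_mul
  mul_inv_rev := pinv_mul
  commute_of_isIdempotentElem := commute_of_isIdempotentElem

end PBij

noncomputable instance {X : Type*} (T : InvSubsemigroup X) : InverseSemigroup T.carrier where
  toSemigroup := inferInstance
  inv := sinv T
  inv_inv a := Subtype.ext (inv_inv a.1)
  mul_inv_mul_self a := Subtype.ext (InverseSemigroup.mul_inv_mul_self a.1)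
  mul_inv_rev a b := Subtype.ext (InverseSemigroup.mul_inv_rev a.1 b.1)
  commute_of_isIdempotentElem he hf := Subtype.ext
    (InverseSemigroup.commute_of_isIdempotentElem (congrArg Subtype.val he)
      (congrArg Subtype.val hf)).eq

theorem sinv_eq_inv {X : Type*} (T : InvSubsemigroup X) (a : T.carrier) : sinv T a = a⁻¹ := rfl

theorem conj_restriction_general {X : Type*} (T : InvSubsemigroup X)
    (x y a ex ey : T.carrier)
    (hex : IsEIdem x ex) (hey : IsEIdem y ey)
    (hord : ∃ f : T.carrier, f * f = f ∧ ex = sinv T a * a * f)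
    (hy : y = a * x * sinv T a) :
    sinv T (a * ex) * (a * ex) = ex ∧
    (a * ex) * sinv T (a * ex) = ey ∧
    y * ey = (a * ex) * (x * ex) * sinv T (a * ex) ∧
    x * ex = sinv T (a * ex) * (y * ey) * (a * ex) ∧
    PrimConj (x * ex) (y * ey) ∧
    SgConj (x * ex) (y * ey) := by
  simp only [sinv_eq_inv] at hord hy ⊢
  subst hy
  have hdom : (a * ex)⁻¹ * (a * ex) = ex := inv_mul_self_eq_of_natLE hex.isIdempotentElem hord
  have hran : a * ex * (a * ex)⁻¹ = ey := mul_inv_self_eq_of_isEIdem hex hey hord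
  have hsemi : a * ex * x = a * x * a⁻¹ * (a * ex) := semiconjBy_mul_of_natLE hex.commute hord
  have hxex : x * ex = (a * ex)⁻¹ * (a * ex * x) := by
    rw [← mul_assoc, hdom, hex.commute.eq]
  have hyey : a * x * a⁻¹ * ey = a * ex * x * (a * ex)⁻¹ := by
    rw [← hran, hsemi]
    simp only [mul_assoc]
  have hprim : PrimConj (x * ex) (a * x * a⁻¹ * ey) := primConj_of_eq_mul hxex hyey
  refine ⟨hdom, hran, ?_, ?_, hprim, .single hprim⟩
  · rw [hyey, ← hex.commute.eq, ← mul_assoc, hex.isIdempotentElem.mul_mul_self]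
  · rw [hyey, hxex]
    simp only [mul_assoc]
    rw [hdom, ← hex.commute.eq, hex.isIdempotentElem.mul_self_mul]

/-- let `S ⊆ IS(X)` be a group-bound inverse subsemigroup,
`y = axa⁻¹` with `a⁻¹a ≥ e_x`, and `â = a e_x`. Then `â⁻¹â = e_x`,
`ââ⁻¹ = e_y`, `y e_y = â (x e_x) â⁻¹` and `x e_x = â⁻¹ (y e_y) â`; in
particular `x e_x ∼_p y e_y`, hence `x e_x ∼ y e_y`. -/
theorem conj_restriction {X : Type*} (T : InvSubsemigroup X)
    (hGB : GroupBound T.carrier) (x y a ex ey : T.carrier)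
    (hex : IsEIdem x ex) (hey : IsEIdem y ey)
    (hord : ∃ f : T.carrier, f * f = f ∧ ex = sinv T a * a * f)
    (hy : y = a * x * sinv T a) :
    sinv T (a * ex) * (a * ex) = ex ∧
    (a * ex) * sinv T (a * ex) = ey ∧
    y * ey = (a * ex) * (x * ex) * sinv T (a * ex) ∧
    x * ex = sinv T (a * ex) * (y * ey) * (a * ex) ∧
    PrimConj (x * ex) (y * ey) ∧
    SgConj (x * ex) (y * ey) :=
  conj_restriction_general T x y a ex ey hex hey hord hy

end SgConjPaper
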